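/- arXiv:1901.02634 — 9 statements merged into one kernel-verified Lean document; each statement's English description precedes it below -/
import Mathlib

section
/- Let ∂ be a Fox derivative in the group algebra A = R[π]. Then for all x, y ∈ π one has Δ_∂(xy) = Δ_∂(yx) in A. -/
open MonoidAlgebra

/-- A Fox derivative in the group algebra `R[G]`: an `R`-linear map `∂` with
`∂(gh) = ∂(g) + g·∂(h)` for all `g, h ∈ G`. -/
def IsFoxDerivative {R : Type*} [CommRing R] {G : Type*} [Group G]
    (D : MonoidAlgebra R G →ₗ[R] MonoidAlgebra R G) : Prop :=
  ∀ g h : G, D (of R G (g * h)) = D (of R G g) + of R G g * D (of R G h)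

/-- `Δ` is the `R`-linear map determined on the basis `G` by
`Δ(x) = Σ_a (x/a)_∂ · a⁻¹ x a`, where `∂(x) = Σ_a (x/a)_∂ · a`. -/
def IsDeltaOf {R : Type*} [CommRing R] {G : Type*} [Group G]
    (D Δ : MonoidAlgebra R G →ₗ[R] MonoidAlgebra R G) : Prop :=
  ∀ g : G, Δ (of R G g) =
    Finsupp.sum (D (of R G g)).coeff fun a r => r • of R G (a⁻¹ * g * a)

/-!
Put `C_c(Σ r_a a) = Σ r_a · a⁻¹ c a`, so that `Δ(g) = C_g(∂g)`. The map `C_c` is `R`-linear and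
`C_c(g f) = C_{g⁻¹cg}(f)`, hence the Fox rule gives `Δ(xy) = C_{xy}(∂x) + C_{yx}(∂y)`, which is
symmetric in `x` and `y`.
-/

namespace MonoidAlgebra

variable {R G : Type*} [CommSemiring R] [Group G]

variable (R) in
noncomputable def conjSum (c : G) : MonoidAlgebra R G →ₗ[R] MonoidAlgebra R G :=
  Finsupp.linearCombination R (fun a => of R G (a⁻¹ * c * a)) ∘ₗ
    (coeffLinearEquiv R).toLinearMap

lemma conjSum_apply (c : G) (f : MonoidAlgebra R G) :
    conjSum R c f = f.coeff.sum fun a r => r • of R G (a⁻¹ * c * a) :=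
  Finsupp.linearCombination_apply R _

lemma conjSum_of_mul (c g : G) (f : MonoidAlgebra R G) :
    conjSum R c (of R G g * f) = conjSum R (g⁻¹ * c * g) f := by
  suffices conjSum R c ∘ₗ LinearMap.mulLeft R (of R G g) = conjSum R (g⁻¹ * c * g) from
    congr($this f)
  ext b
  simp [conjSum, mul_assoc]

end MonoidAlgebra

theorem delta_comm {R : Type*} [CommRing R] {G : Type*} [Group G]
    (D Δ : MonoidAlgebra R G →ₗ[R] MonoidAlgebra R G)
    (hD : IsFoxDerivative D) (hΔ : IsDeltaOf D Δ) :
    ∀ x y : G, Δ (of R G (x * y)) = Δ (of R G (y * x)) := by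
  have hΔ_conjSum (g : G) : Δ (of R G g) = conjSum R g (D (of R G g)) :=
    (hΔ g).trans (conjSum_apply g _).symm
  intro x y
  rw [hΔ_conjSum, hΔ_conjSum, hD, hD, map_add, map_add, conjSum_of_mul, conjSum_of_mul,
    inv_mul_cancel_left, inv_mul_cancel_left, add_comm]
end

section
/- Let ∂ be a Fox derivative in the group algebra A = R[π]. Then Δ_∂(A') = 0, i.e., the R-linear map Δ_∂ : A → A vanishes on the R-submodule A' = [A,A] spanned by the commutators xy − yx with x, y ∈ A. -/
open MonoidAlgebra

/-- The submodule `A' = [A,A]` of the algebra `A` spanned by all commutators. -/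
def commutatorSubmodule (R : Type*) [CommRing R] (A : Type*) [Ring A] [Algebra R A] :
    Submodule R A :=
  Submodule.span R {z : A | ∃ x y : A, z = x * y - y * x}

lemma aux_sum {R : Type*} [CommRing R] {G : Type*} [Group G] (g k : G)
    (x : MonoidAlgebra R G) :
    Finsupp.sum (of R G g * x).coeff (fun a r => r • of R G (a⁻¹ * k * a)) =
    Finsupp.sum x.coeff (fun b r => r • of R G ((g*b)⁻¹ * k * (g*b))) := by
  induction x using MonoidAlgebra.induction_linear with
  | zero => simp
  | add f h hf hh =>
    rw [mul_add, MonoidAlgebra.coeff_add, MonoidAlgebra.coeff_add,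
      Finsupp.sum_add_index' (h := fun a r => r • of R G (a⁻¹ * k * a))
        (fun _ => zero_smul _ _) (fun _ _ _ => add_smul _ _ _),
      Finsupp.sum_add_index' (h := fun b r => r • of R G ((g*b)⁻¹ * k * (g*b)))
        (fun _ => zero_smul _ _) (fun _ _ _ => add_smul _ _ _), hf, hh]
  | single b s =>
    have e : of R G g * (MonoidAlgebra.single b s) = MonoidAlgebra.single (g*b) s := by
      rw [MonoidAlgebra.of_apply, MonoidAlgebra.single_mul_single, one_mul]
    rw [e, MonoidAlgebra.coeff_single, MonoidAlgebra.coeff_single,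
      Finsupp.sum_single_index (h := fun a r => r • of R G (a⁻¹ * k * a)) (zero_smul _ _),
      Finsupp.sum_single_index (h := fun b r => r • of R G ((g*b)⁻¹ * k * (g*b))) (zero_smul _ _)]

lemma key {R : Type*} [CommRing R] {G : Type*} [Group G]
    (D Δ : MonoidAlgebra R G →ₗ[R] MonoidAlgebra R G)
    (hD : IsFoxDerivative D) (hΔ : IsDeltaOf D Δ) (g h : G) :
    Δ (of R G g * of R G h) = Δ (of R G h * of R G g) := by
  rw [← map_mul, ← map_mul, hΔ _, hΔ _, hD _ _, hD _ _, MonoidAlgebra.coeff_add, MonoidAlgebra.coeff_add,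
    Finsupp.sum_add_index' (h := fun a r => r • of R G (a⁻¹ * (g*h) * a))
      (fun _ => zero_smul _ _) (fun _ _ _ => add_smul _ _ _),
    Finsupp.sum_add_index' (h := fun a r => r • of R G (a⁻¹ * (h*g) * a))
      (fun _ => zero_smul _ _) (fun _ _ _ => add_smul _ _ _),
    aux_sum, aux_sum]
  have h1 : (Finsupp.sum (D (of R G g)).coeff fun a r => r • of R G (a⁻¹ * (g*h) * a)) =
      Finsupp.sum (D (of R G g)).coeff fun a r => r • of R G ((h*a)⁻¹ * (h*g) * (h*a)) :=
    Finsupp.sum_congr fun a _ => by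
      rw [show a⁻¹*(g*h)*a = (h*a)⁻¹*(h*g)*(h*a) from by group]
  have h2 : (Finsupp.sum (D (of R G h)).coeff fun b r => r • of R G ((g*b)⁻¹ * (g*h) * (g*b))) =
      Finsupp.sum (D (of R G h)).coeff fun b r => r • of R G (b⁻¹ * (h*g) * b) :=
    Finsupp.sum_congr fun b _ => by
      rw [show (g*b)⁻¹*(g*h)*(g*b) = b⁻¹*(h*g)*b from by group]
  rw [h1, h2]
  exact add_comm _ _

theorem delta_vanishes_on_commutators {R : Type*} [CommRing R] {G : Type*} [Group G]
    (D Δ : MonoidAlgebra R G →ₗ[R] MonoidAlgebra R G)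
    (hD : IsFoxDerivative D) (hΔ : IsDeltaOf D Δ) :
    ∀ z ∈ commutatorSubmodule R (MonoidAlgebra R G), Δ z = 0 := by
  have main : ∀ x y : MonoidAlgebra R G, Δ (x * y) = Δ (y * x) := by
    intro x y
    induction x using MonoidAlgebra.induction_linear with
    | zero => simp
    | add f h hf hh => rw [add_mul, mul_add, map_add, map_add, hf, hh]
    | single g r =>
      induction y using MonoidAlgebra.induction_linear with
      | zero => simp
      | add f h hf hh => rw [add_mul, mul_add, map_add, map_add, hf, hh]
      | single b s =>
        have e1 : (MonoidAlgebra.single g r : MonoidAlgebra R G) = r • of R G g := by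
          rw [MonoidAlgebra.of_apply, MonoidAlgebra.smul_single', mul_one]
        have e2 : (MonoidAlgebra.single b s : MonoidAlgebra R G) = s • of R G b := by
          rw [MonoidAlgebra.of_apply, MonoidAlgebra.smul_single', mul_one]
        rw [e1, e2, smul_mul_assoc, mul_smul_comm, smul_mul_assoc, mul_smul_comm,
          map_smul, map_smul, map_smul, map_smul, key D Δ hD hΔ g b, smul_smul,
          smul_smul, mul_comm r s]
  intro z hz
  refine Submodule.span_induction ?_ (map_zero Δ) ?_ ?_ hz
  · rintro _ ⟨x, y, rfl⟩
    rw [map_sub, main, sub_self]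
  · intro a b _ _ ha hb; rw [map_add, ha, hb, add_zero]
  · intro r a _ ha; rw [map_smul, ha, smul_zero]
end

section
/- Let ∂ be a Fox derivative in the group algebra A = R[π] and let F ∈ A. Then the R-linear map d_F : A → A determined on the basis π by d_F(x) = Σ_{a∈π} (x/a)_∂ · aFa⁻¹x is a derivation of A, i.e., d_F(uv) = d_F(u)·v + u·d_F(v) for all u, v ∈ A. -/
open MonoidAlgebra

private lemma of_mul_eq_mapDomain {R : Type*} [CommRing R] {G : Type*} [Group G]
    (g : G) (x : MonoidAlgebra R G) :
    (of R G g * x).coeff = Finsupp.mapDomain (fun a => g * a) x.coeff := by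
  induction x using MonoidAlgebra.induction_linear with
  | zero => simp
  | add f₁ f₂ h₁ h₂ => rw [mul_add, coeff_add, coeff_add, Finsupp.mapDomain_add, h₁, h₂]
  | single a r =>
    rw [coeff_single, Finsupp.mapDomain_single]
    simp [MonoidAlgebra.of_apply, MonoidAlgebra.single_mul_single]

private lemma key_basis {R : Type*} [CommRing R] {G : Type*} [Group G]
    (D : MonoidAlgebra R G →ₗ[R] MonoidAlgebra R G) (hD : IsFoxDerivative D)
    (F : MonoidAlgebra R G)
    (d : MonoidAlgebra R G →ₗ[R] MonoidAlgebra R G)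
    (hd : ∀ g : G, d (of R G g) =
      Finsupp.sum (D (of R G g)).coeff fun a r => r • (of R G a * F * of R G a⁻¹ * of R G g))
    (g h : G) :
    d (of R G g * of R G h) = d (of R G g) * of R G h + of R G g * d (of R G h) := by
  classical
  have hof : of R G g * of R G h = of R G (g * h) := (map_mul (of R G) g h).symm
  rw [hof, hd, hD g h, coeff_add, Finsupp.sum_add_index (by simp) (by intros; rw [add_smul])]
  congr 1
  · rw [hd, Finsupp.sum, Finsupp.sum, Finset.sum_mul]
    refine Finset.sum_congr rfl fun a _ => ?_
    rw [smul_mul_assoc, map_mul]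
    simp [mul_assoc]
  · rw [of_mul_eq_mapDomain g (D (of R G h)),
      Finsupp.sum_mapDomain_index_inj (mul_right_injective g), hd, Finsupp.mul_sum]
    refine Finset.sum_congr rfl fun a _ => ?_
    simp only []
    rw [mul_smul_comm]
    congr 1
    have e : (g * a)⁻¹ * (g * h) = a⁻¹ * h := by group
    calc of R G (g * a) * F * of R G (g * a)⁻¹ * of R G (g * h)
        = of R G (g * a) * F * of R G (a⁻¹ * h) := by rw [mul_assoc, ← map_mul, e]
      _ = of R G g * (of R G a * F * of R G a⁻¹ * of R G h) := by
          simp only [map_mul, mul_assoc]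

theorem dF_is_derivation {R : Type*} [CommRing R] {G : Type*} [Group G]
    (D : MonoidAlgebra R G →ₗ[R] MonoidAlgebra R G) (hD : IsFoxDerivative D)
    (F : MonoidAlgebra R G)
    (d : MonoidAlgebra R G →ₗ[R] MonoidAlgebra R G)
    (hd : ∀ g : G, d (of R G g) =
      Finsupp.sum (D (of R G g)).coeff fun a r => r • (of R G a * F * of R G a⁻¹ * of R G g)) :
    ∀ u v : MonoidAlgebra R G, d (u * v) = d u * v + u * d v := by
  intro u v
  induction u using MonoidAlgebra.induction_on with
  | of g =>
    induction v using MonoidAlgebra.induction_on with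
    | of h => exact key_basis D hD F d hd g h
    | add v₁ v₂ h₁ h₂ => rw [mul_add, map_add, h₁, h₂, map_add]; noncomm_ring
    | smul r v hv => rw [mul_smul_comm, map_smul, hv, map_smul, smul_add]; simp [smul_mul_assoc, mul_smul_comm]
  | add u₁ u₂ h₁ h₂ => rw [add_mul, map_add, h₁, h₂, map_add]; noncomm_ring
  | smul r u hu => rw [smul_mul_assoc, map_smul, hu, map_smul, smul_add]; simp [smul_mul_assoc, mul_smul_comm]
end

section
/- Let m ≥ 1 and let ∂_1, …, ∂_m be Fox derivatives in the group algebra A = R[π]. Then for every index i ∈ {1,…,m} and all elements x_1, …, x_{i−1}, x_{i+1}, …, x_m ∈ A there exists a derivation d : A → A such that for every x ∈ A one has p(Δ_{∂_1}(x_1) ⋯ Δ_{∂_{i−1}}(x_{i−1}) · Δ_{∂_i}(x) · Δ_{∂_{i+1}}(x_{i+1}) ⋯ Δ_{∂_m}(x_m)) = p(d(x)) in Ǎ = A/A'. In other words, the m-linear map (x_1,…,x_m) ↦ p(Δ_{∂_1}(x_1) ⋯ Δ_{∂_m}(x_m)) is a weak derivation in each of its variables. -/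
open MonoidAlgebra

section Aux

variable {R : Type*} [CommRing R] {G : Type*} [Group G]

/-- Cyclic symmetry of the projection `p : A → Ǎ`. -/
lemma mk_mul_comm (u v : MonoidAlgebra R G) :
    Submodule.Quotient.mk (p := commutatorSubmodule R (MonoidAlgebra R G)) (u * v) =
    Submodule.Quotient.mk (p := commutatorSubmodule R (MonoidAlgebra R G)) (v * u) := by
  rw [Submodule.Quotient.eq]
  exact Submodule.subset_span ⟨u, v, rfl⟩

/-- The "twist by `c`" linear map sending `Σ r_a·a` to `Σ r_a · (a c a⁻¹)`. -/
noncomputable def Tw (c : MonoidAlgebra R G) :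
    MonoidAlgebra R G →ₗ[R] MonoidAlgebra R G :=
  (Finsupp.lsum R fun a => LinearMap.toSpanSingleton R (MonoidAlgebra R G)
    (of R G a * c * of R G a⁻¹)) ∘ₗ (coeffLinearEquiv R).toLinearMap

lemma Tw_single (c : MonoidAlgebra R G) (a : G) (r : R) :
    Tw c (single a r) = r • (of R G a * c * of R G a⁻¹) := by
  rw [Tw]
  erw [LinearMap.comp_apply, Finsupp.lsum_single, LinearMap.toSpanSingleton_apply]

lemma Tw_conj (c : MonoidAlgebra R G) (g : G) (F : MonoidAlgebra R G) :
    Tw c (of R G g * F) = of R G g * Tw c F * of R G g⁻¹ := by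
  induction F using MonoidAlgebra.induction_linear with
  | zero => simp
  | add f₁ f₂ h₁ h₂ => simp only [mul_add, map_add, h₁, h₂, add_mul]
  | single a r =>
      have h : of R G g * single a r = single (g*a) r := by
        rw [of_apply, single_mul_single, one_mul]
      rw [h, Tw_single, Tw_single, mul_inv_rev, map_mul (of R G) g a,
        map_mul (of R G) a⁻¹ g⁻¹]
      simp only [mul_smul_comm, smul_mul_assoc, mul_assoc]

/-- The derivation associated to a Fox derivative `Di` and an element `c`:
on the basis, `g ↦ Σ_a (g/a)·(a c a⁻¹)·g`. -/
noncomputable def dAux (Di : MonoidAlgebra R G →ₗ[R] MonoidAlgebra R G)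
    (c : MonoidAlgebra R G) : MonoidAlgebra R G →ₗ[R] MonoidAlgebra R G :=
  (Finsupp.lsum R fun g => LinearMap.toSpanSingleton R (MonoidAlgebra R G)
    (Tw c (Di (of R G g)) * of R G g)) ∘ₗ (coeffLinearEquiv R).toLinearMap

lemma dAux_of (Di : MonoidAlgebra R G →ₗ[R] MonoidAlgebra R G)
    (c : MonoidAlgebra R G) (g : G) :
    dAux Di c (of R G g) = Tw c (Di (of R G g)) * of R G g := by
  have h : dAux Di c (of R G g) = (Finsupp.lsum R fun g =>
      LinearMap.toSpanSingleton R (MonoidAlgebra R G)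
        (Tw c (Di (of R G g)) * of R G g)) (Finsupp.single g (1:R)) := rfl
  rw [h, Finsupp.lsum_single, LinearMap.toSpanSingleton_apply, one_smul]

lemma dAux_leibniz (Di : MonoidAlgebra R G →ₗ[R] MonoidAlgebra R G)
    (c : MonoidAlgebra R G) (hDi : IsFoxDerivative Di) (u v : MonoidAlgebra R G) :
    dAux Di c (u * v) = dAux Di c u * v + u * dAux Di c v := by
  induction u using MonoidAlgebra.induction_on with
  | of g =>
    induction v using MonoidAlgebra.induction_on with
    | of h =>
        rw [← map_mul (of R G) g h, dAux_of, dAux_of, dAux_of, hDi g h, map_add, Tw_conj,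
          map_mul (of R G) g h]
        have hg : of R G g⁻¹ * of R G g = 1 := by
          rw [← map_mul (of R G), inv_mul_cancel, map_one]
        rw [add_mul]
        congr 1
        · rw [mul_assoc]
        · calc of R G g * Tw c (Di (of R G h)) * of R G g⁻¹ * (of R G g * of R G h)
              = of R G g * (Tw c (Di (of R G h)) * ((of R G g⁻¹ * of R G g) * of R G h)) := by
                simp only [mul_assoc]
            _ = _ := by rw [hg, one_mul, ← mul_assoc]
    | add v₁ v₂ h₁ h₂ =>
        simp only [mul_add, map_add, h₁, h₂]
        abel
    | smul r v h =>
        simp only [mul_smul_comm, map_smul, h, smul_add, smul_mul_assoc]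
  | add u₁ u₂ h₁ h₂ =>
      simp only [add_mul, map_add, h₁, h₂]
      abel
  | smul r u h =>
      simp only [smul_mul_assoc, map_smul, h, smul_add, mul_smul_comm]

lemma ofFn_update_prod {M : Type*} [Monoid M] {m : ℕ} (f g : Fin m → M) (i : Fin m)
    (hg : ∀ j, j ≠ i → g j = f j) :
    (List.ofFn g).prod =
      ((List.ofFn f).take i.1).prod * g i * ((List.ofFn f).drop (i.1+1)).prod := by
  have htake : (List.ofFn g).take i.1 = (List.ofFn f).take i.1 := by
    apply List.ext_getElem (by simp)
    intro n h₁ h₂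
    have hn : n < i.1 := by
      simpa using lt_of_lt_of_le h₁ (by simp)
    rw [List.getElem_take, List.getElem_take, List.getElem_ofFn, List.getElem_ofFn]
    exact hg _ (Fin.ne_of_val_ne (Nat.ne_of_lt hn))
  have hdrop : (List.ofFn g).drop (i.1+1) = (List.ofFn f).drop (i.1+1) := by
    apply List.ext_getElem (by simp)
    intro n h₁ h₂
    rw [List.getElem_drop, List.getElem_drop, List.getElem_ofFn, List.getElem_ofFn]
    refine hg _ (Fin.ne_of_val_ne ?_)
    simp only
    omega
  have hi : i.1 < (List.ofFn g).length := by simp [i.isLt]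
  conv_lhs => rw [← List.take_append_drop i.1 (List.ofFn g)]
  rw [List.prod_append, List.drop_eq_getElem_cons hi, List.prod_cons, htake,
    List.getElem_ofFn, hdrop, Fin.eta, ← mul_assoc]

end Aux

/-- The map `(x_1,…,x_m) ↦ p(Δ_{∂_1}(x_1) ⋯ Δ_{∂_m}(x_m))` is a weak derivation
in each of its variables: fixing all variables except the `i`-th one, the resulting
map `Ǎ → Ǎ` (precomposed with `p : A → Ǎ`) is induced by a derivation of `A`. -/
theorem mu_is_brace {R : Type*} [CommRing R] {G : Type*} [Group G]
    (m : ℕ) (hm : 1 ≤ m)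
    (D Δ : Fin m → (MonoidAlgebra R G →ₗ[R] MonoidAlgebra R G))
    (hD : ∀ j, IsFoxDerivative (D j)) (hΔ : ∀ j, IsDeltaOf (D j) (Δ j))
    (i : Fin m) (xs : Fin m → MonoidAlgebra R G) :
    ∃ d : MonoidAlgebra R G →ₗ[R] MonoidAlgebra R G,
      (∀ u v : MonoidAlgebra R G, d (u * v) = d u * v + u * d v) ∧
      ∀ x : MonoidAlgebra R G,
        (Submodule.Quotient.mk (p := commutatorSubmodule R (MonoidAlgebra R G))
          ((List.ofFn fun j => (Δ j) (Function.update xs i x j)).prod)) =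
        Submodule.Quotient.mk (p := commutatorSubmodule R (MonoidAlgebra R G)) (d x) := by
  classical
  set W : MonoidAlgebra R G :=
    ((List.ofFn fun j => Δ j (xs j)).take i.1).prod with hW
  set W' : MonoidAlgebra R G :=
    ((List.ofFn fun j => Δ j (xs j)).drop (i.1+1)).prod with hW'
  set c : MonoidAlgebra R G := W' * W with hc
  refine ⟨dAux (D i) c, dAux_leibniz (D i) c (hD i), ?_⟩
  intro x
  have hsplit : (List.ofFn fun j => (Δ j) (Function.update xs i x j)).prod
      = W * (Δ i) x * W' := by
    rw [hW, hW',
      ofFn_update_prod (fun j => Δ j (xs j)) (fun j => Δ j (Function.update xs i x j)) i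
        (fun j hj => by simp [Function.update_of_ne hj]),
      Function.update_self]
  rw [hsplit]
  clear hsplit
  -- Now prove `mk (W * Δ i x * W') = mk (dAux (D i) c x)` by linearity in `x`.
  induction x using MonoidAlgebra.induction_on with
  | of g =>
      rw [hΔ i g, dAux_of]
      -- rewrite Tw applied to the Finsupp sum
      have hTw : Tw c (D i (of R G g)) =
          Finsupp.sum (D i (of R G g)).coeff fun a r => r • (of R G a * c * of R G a⁻¹) := by
        conv_lhs => rw [← sum_coeff_single (D i (of R G g))]
        rw [map_finsuppSum]
        exact Finsupp.sum_congr fun a _ => Tw_single c a _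
      rw [hTw, Finsupp.sum_mul, Finsupp.mul_sum, Finsupp.sum_mul]
      rw [show (Submodule.Quotient.mk :
            MonoidAlgebra R G → _ ⧸ commutatorSubmodule R (MonoidAlgebra R G)) =
          (commutatorSubmodule R (MonoidAlgebra R G)).mkQ from rfl]
      rw [map_finsuppSum, map_finsuppSum]
      refine Finsupp.sum_congr fun a _ => ?_
      set r := (D i (of R G g)).coeff a
      have e1 : W * (r • of R G (a⁻¹ * g * a)) * W'
          = r • (W * of R G (a⁻¹ * g * a) * W') := by
        rw [mul_smul_comm, smul_mul_assoc]
      have e2 : r • (of R G a * c * of R G a⁻¹) * of R G g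
          = r • (of R G a * c * of R G a⁻¹ * of R G g) := by
        rw [smul_mul_assoc]
      rw [e1, e2, map_smul, map_smul]
      congr 1
      show Submodule.Quotient.mk (p := commutatorSubmodule R (MonoidAlgebra R G)) _ =
        Submodule.Quotient.mk (p := commutatorSubmodule R (MonoidAlgebra R G)) _
      rw [mk_mul_comm (W * of R G (a⁻¹ * g * a)) W', ← mul_assoc, ← hc]
      rw [map_mul (of R G) (a⁻¹ * g) a, map_mul (of R G) a⁻¹ g]
      rw [show c * (of R G a⁻¹ * of R G g * of R G a)
          = (c * of R G a⁻¹ * of R G g) * of R G a by simp only [mul_assoc]]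
      rw [mk_mul_comm (c * of R G a⁻¹ * of R G g) (of R G a)]
      congr 1
      simp only [mul_assoc]
  | add f g hf hg =>
      rw [map_add, map_add, mul_add, add_mul, Submodule.Quotient.mk_add,
        Submodule.Quotient.mk_add, hf, hg]
  | smul r f hf =>
      rw [map_smul, map_smul, mul_smul_comm, smul_mul_assoc,
        Submodule.Quotient.mk_smul, Submodule.Quotient.mk_smul, hf]
end

section
/- Let ∂ be a Fox derivative in the group algebra A = R[π] and let aug : A → R be the augmentation. Then the R-linear map d_∂ : A → A determined on the basis π by d_∂(g) = aug(∂(g))·g is a derivation of A, and p ∘ Δ_∂ = p ∘ d_∂, i.e., Δ_∂(x) − d_∂(x) ∈ A' for every x ∈ A. -/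
open MonoidAlgebra

/-- `d_∂` is a derivation and `Δ_∂ - d_∂` takes values in `[A,A]`. -/
theorem fox_derivation_induces_delta {R : Type*} [CommRing R] {G : Type*} [Group G]
    (D Δ : MonoidAlgebra R G →ₗ[R] MonoidAlgebra R G)
    (hD : IsFoxDerivative D) (hΔ : IsDeltaOf D Δ)
    (d : MonoidAlgebra R G →ₗ[R] MonoidAlgebra R G)
    (hd : ∀ g : G, d (of R G g) =
      (Finsupp.sum (D (of R G g)).coeff fun _ r => r) • of R G g) :
    (∀ u v : MonoidAlgebra R G, d (u * v) = d u * v + u * d v) ∧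
    ∀ x : MonoidAlgebra R G, Δ x - d x ∈ commutatorSubmodule R (MonoidAlgebra R G) := by
  have haug : ∀ f : MonoidAlgebra R G,
      (Finsupp.sum f.coeff fun _ r => r) = MonoidAlgebra.lift R R G 1 f := by
    intro f
    rw [MonoidAlgebra.lift_apply]
    simp
  have hbasis : ∀ g h : G, d (of R G g * of R G h) =
      d (of R G g) * of R G h + of R G g * d (of R G h) := by
    intro g h
    have h1 : of R G g * of R G h = of R G (g * h) := (map_mul (of R G) g h).symm
    rw [h1, hd, hd, hd, hD g h, haug, haug, haug, map_add, map_mul,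
      MonoidAlgebra.lift_of]
    simp only [MonoidHom.one_apply, one_mul, ← h1]
    rw [add_smul, smul_mul_assoc, mul_smul_comm]
  constructor
  · intro u v
    induction u using MonoidAlgebra.induction_linear with
    | zero => simp
    | add f g hf hg =>
      simp only [add_mul, map_add, hf, hg]
      abel
    | single a b =>
      induction v using MonoidAlgebra.induction_linear with
      | zero => simp
      | add f g hf hg =>
        simp only [mul_add, map_add, hf, hg]
        abel
      | single c e =>
        have ha : (MonoidAlgebra.single a b : MonoidAlgebra R G) = b • of R G a := by
          simp [MonoidAlgebra.of_apply, MonoidAlgebra.smul_single]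
        have hc : (MonoidAlgebra.single c e : MonoidAlgebra R G) = e • of R G c := by
          simp [MonoidAlgebra.of_apply, MonoidAlgebra.smul_single]
        rw [ha, hc]
        rw [smul_mul_assoc, mul_smul_comm, map_smul, map_smul, map_smul, map_smul,
          hbasis a c]
        simp only [smul_add, smul_mul_assoc, mul_smul_comm, smul_smul]
        rw [mul_comm e b]
  · have hx : ∀ g : G, Δ (of R G g) - d (of R G g) ∈
        commutatorSubmodule R (MonoidAlgebra R G) := by
      intro g
      rw [hΔ g, hd g, Finsupp.sum, Finsupp.sum, Finset.sum_smul,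
        ← Finset.sum_sub_distrib]
      apply Submodule.sum_mem
      intro a _
      rw [← smul_sub]
      apply Submodule.smul_mem
      apply Submodule.subset_span
      refine ⟨of R G a⁻¹, of R G (g * a), ?_⟩
      rw [← map_mul, ← map_mul]
      congr 1 <;> group
    intro x
    induction x using MonoidAlgebra.induction_linear with
    | zero => simp [commutatorSubmodule]
    | add f g hf hg =>
      have : Δ (f + g) - d (f + g) = (Δ f - d f) + (Δ g - d g) := by
        simp only [map_add]; abel
      rw [this]
      exact add_mem hf hg
    | single a b =>
      have ha : (MonoidAlgebra.single a b : MonoidAlgebra R G) = b • of R G a := by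
        simp [MonoidAlgebra.of_apply, MonoidAlgebra.smul_single]
      rw [ha, map_smul, map_smul, ← smul_sub]
      exact Submodule.smul_mem _ _ (hx a)
end

section
/- Let ∂ be a Fox derivative in the group algebra A = R[π], let g ∈ π, and let ∂·g be the Fox derivative x ↦ ∂(x)·g. Then equivalent Fox derivatives induce the same braces: for every m ≥ 1 and all x_1, …, x_m ∈ A one has p(Δ_{∂·g}(x_1) ⋯ Δ_{∂·g}(x_m)) = p(Δ_∂(x_1) ⋯ Δ_∂(x_m)) in Ǎ = A/A'. -/
open MonoidAlgebra

private theorem delta_conj_aux {R : Type*} [CommRing R] {G : Type*} [Group G]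
    (D Δ : MonoidAlgebra R G →ₗ[R] MonoidAlgebra R G)
    (hΔ : IsDeltaOf D Δ) (g : G)
    (D' Δ' : MonoidAlgebra R G →ₗ[R] MonoidAlgebra R G)
    (hD' : ∀ x : MonoidAlgebra R G, D' x = D x * of R G g)
    (hΔ' : IsDeltaOf D' Δ') :
    ∀ x, Δ' x = of R G g⁻¹ * Δ x * of R G g := by
  have hbasis : ∀ h : G, Δ' (of R G h) = of R G g⁻¹ * Δ (of R G h) * of R G g := by
    intro h
    rw [hΔ' h, hΔ h, hD' (of R G h)]
    have hsum : ∀ (F : G → MonoidAlgebra R G) (y : MonoidAlgebra R G),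
        (y * of R G g).coeff.sum (fun a r => r • F a) = y.coeff.sum (fun a r => r • F (a * g)) := by
      intro F y
      induction y using MonoidAlgebra.induction_on with
      | of k => simp [MonoidAlgebra.of_apply, single_mul_single, Finsupp.sum_single_index]
      | add x y hx hy =>
        rw [add_mul, coeff_add, coeff_add, Finsupp.sum_add_index' (by simp) (by simp [add_smul]),
          Finsupp.sum_add_index' (by simp) (by simp [add_smul]), hx, hy]
      | smul r x hx =>
        rw [smul_mul_assoc, coeff_smul, coeff_smul, Finsupp.sum_smul_index' (by simp),
          Finsupp.sum_smul_index' (by simp)]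
        simp only [smul_assoc, ← Finsupp.smul_sum, hx]
    rw [hsum, Finsupp.mul_sum, Finsupp.sum_mul]
    refine Finsupp.sum_congr fun a _ => ?_
    rw [mul_smul_comm, smul_mul_assoc, ← map_mul, ← map_mul]
    congr 2
    group
  intro x
  induction x using MonoidAlgebra.induction_on with
  | of h => exact hbasis h
  | add x y hx hy => rw [map_add, map_add, hx, hy, mul_add, add_mul]
  | smul r x hx => rw [map_smul, map_smul, hx, mul_smul_comm, smul_mul_assoc]

private theorem mk_conj_eq {R : Type*} [CommRing R] {A : Type*} [Ring A] [Algebra R A]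
    (u v w : A) (huv : v * u = 1) :
    (Submodule.Quotient.mk (p := commutatorSubmodule R A) (u * w * v)) =
      Submodule.Quotient.mk (p := commutatorSubmodule R A) w := by
  rw [Submodule.Quotient.eq]
  have : u * w * v - w = u * (w * v) - (w * v) * u := by
    rw [mul_assoc, mul_assoc, huv, mul_one]
  rw [this]
  exact Submodule.subset_span ⟨u, w * v, rfl⟩

/-- Equivalent Fox derivatives induce the same braces: for the Fox derivative
`∂·g : x ↦ ∂(x)·g` one has `p(Δ_{∂·g}(x₁) ⋯ Δ_{∂·g}(x_m)) = p(Δ_∂(x₁) ⋯ Δ_∂(x_m))`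
in `Ǎ = A/A'` for every `m ≥ 1` and all `x₁, …, x_m ∈ A`. -/
theorem equivalent_fox_derivatives_same_brace {R : Type*} [CommRing R] {G : Type*} [Group G]
    (D Δ : MonoidAlgebra R G →ₗ[R] MonoidAlgebra R G)
    (hD : IsFoxDerivative D) (hΔ : IsDeltaOf D Δ)
    (g : G)
    (D' Δ' : MonoidAlgebra R G →ₗ[R] MonoidAlgebra R G)
    (hD' : ∀ x : MonoidAlgebra R G, D' x = D x * of R G g)
    (hΔ' : IsDeltaOf D' Δ') :
    ∀ (m : ℕ), 1 ≤ m → ∀ xs : Fin m → MonoidAlgebra R G,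
      (Submodule.Quotient.mk (p := commutatorSubmodule R (MonoidAlgebra R G))
        ((List.ofFn fun j => Δ' (xs j)).prod)) =
      Submodule.Quotient.mk (p := commutatorSubmodule R (MonoidAlgebra R G))
        ((List.ofFn fun j => Δ (xs j)).prod) := by
  have key := delta_conj_aux D Δ hΔ g D' Δ' hD' hΔ'
  intro m hm xs
  have hprod : ∀ (l : List (MonoidAlgebra R G)),
      (l.map fun y => of R G g⁻¹ * y * of R G g).prod
        = of R G g⁻¹ * l.prod * of R G g := by
    intro l
    induction l with
    | nil => rw [List.map_nil, List.prod_nil, mul_one, ← map_mul, inv_mul_cancel, map_one]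
    | cons a t ih =>
      simp only [List.map_cons, List.prod_cons, ih, ← mul_assoc]
      rw [mul_assoc (of R G g⁻¹ * a), ← map_mul, mul_inv_cancel, map_one, mul_one,
        mul_assoc (of R G g⁻¹)]
  have : (List.ofFn fun j => Δ' (xs j)) =
      (List.ofFn fun j => Δ (xs j)).map fun y => of R G g⁻¹ * y * of R G g := by
    rw [List.map_ofFn]
    congr 1
    funext j
    exact key (xs j)
  rw [this, hprod]
  exact mk_conj_eq _ _ _ (by rw [← map_mul, mul_inv_cancel, map_one])
end

section
/- Let B be a commutative R-algebra carrying a skew-symmetric R-bilinear bracket [−,−] : B × B → B which is a derivation in each variable, and a cyclically symmetric R-trilinear bracket [−,−,−] : B³ → B which is a derivation in each variable. Let S ⊆ B be a subset generating B as an R-algebra. If the quasi-Jacobi identity [[x,y],z] + [[y,z],x] + [[z,x],y] = [x,y,z] − [y,x,z] holds for all x, y, z ∈ S, then it holds for all x, y, z ∈ B. -/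
/-!
The defect `J(x, y, z) = [[x,y],z] + [[y,z],x] + [[z,x],y] - ([x,y,z] - [y,x,z])` is trilinear,
and it is a derivation in each variable: expanding `J(uv, y, z)` by the Leibniz rules leaves,
besides `J(u, y, z) v + u J(v, y, z)`, the cross terms `[u,y][v,z] + [u,z][v,y] + [z,u][v,y] + [u,y][z,v]`,
which cancel in pairs by skew-symmetry. A derivation vanishing on generators vanishes, so
fixing two arguments at a time propagates `J = 0` from `S × S × S` to all of `B × B × B`.
-/

open Algebra

section Leibniz

variable {R A M : Type*} [CommSemiring R] [CommSemiring A] [Algebra R A]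
  [AddCancelCommMonoid M] [Module R M] [Module A M] {S : Set A}

theorem LinearMap.apply_eq_zero_of_leibniz {D : A →ₗ[R] M}
    (hD : ∀ a b, D (a * b) = a • D b + b • D a) (hS : adjoin R S = ⊤)
    (hDS : ∀ s ∈ S, D s = 0) (a : A) : D a = 0 :=
  DFunLike.congr_fun (Derivation.ext_of_adjoin_eq_top (D1 := .mk' D hD) (D2 := 0) S hS hDS) a

theorem LinearMap.apply₃_eq_zero_of_leibniz {T : A →ₗ[R] A →ₗ[R] A →ₗ[R] M}
    (hT₁ : ∀ a b y z, T (a * b) y z = a • T b y z + b • T a y z)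
    (hT₂ : ∀ x a b z, T x (a * b) z = a • T x b z + b • T x a z)
    (hT₃ : ∀ x y a b, T x y (a * b) = a • T x y b + b • T x y a)
    (hS : adjoin R S = ⊤) (hTS : ∀ x ∈ S, ∀ y ∈ S, ∀ z ∈ S, T x y z = 0) (x y z : A) :
    T x y z = 0 := by
  have h₃ : ∀ x ∈ S, ∀ y ∈ S, ∀ z, T x y z = 0 := fun x hx y hy =>
    (T x y).apply_eq_zero_of_leibniz (hT₃ x y) hS (hTS x hx y hy)
  have h₂ : ∀ x ∈ S, ∀ y z, T x y z = 0 := fun x hx y z =>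
    ((T x).flip z).apply_eq_zero_of_leibniz (fun a b => hT₂ x a b z) hS
      (fun y hy => h₃ x hx y hy z) y
  exact ((T.flip y).flip z).apply_eq_zero_of_leibniz (fun a b => hT₁ a b y z) hS
    (fun x hx => h₂ x hx y z) x

end Leibniz

section QuasiJacobi

variable {R B : Type*} [CommRing R] [CommRing B] [Algebra R B]
  (b2 : B →ₗ[R] B →ₗ[R] B) (b3 : B →ₗ[R] B →ₗ[R] B →ₗ[R] B)

def quasiJacobiator : B →ₗ[R] B →ₗ[R] B →ₗ[R] B :=
  LinearMap.mk₂ R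
    (fun x y => b2 (b2 x y) + b2.flip x ∘ₗ b2 y + b2.flip y ∘ₗ b2.flip x - (b3 x y - b3 y x))
    (by intros; ext; simp; abel)
    (by intros; ext; simp [smul_add, smul_sub])
    (by intros; ext; simp; abel)
    (by intros; ext; simp [smul_add, smul_sub])

@[simp]
theorem quasiJacobiator_apply (x y z : B) :
    quasiJacobiator b2 b3 x y z =
      b2 (b2 x y) z + b2 (b2 y z) x + b2 (b2 z x) y - (b3 x y z - b3 y x z) :=
  rfl

variable {b2 b3}
variable (hskew : ∀ x y : B, b2 x y = - b2 y x)
  (hd2₁ : ∀ u v y : B, b2 (u * v) y = b2 u y * v + u * b2 v y)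
  (hd2₂ : ∀ x u v : B, b2 x (u * v) = b2 x u * v + u * b2 x v)
include hskew hd2₁ hd2₂

theorem quasiJacobiator_mul_left
    (hd3₁ : ∀ u v y z : B, b3 (u * v) y z = b3 u y z * v + u * b3 v y z)
    (hd3₂ : ∀ x u v z : B, b3 x (u * v) z = b3 x u z * v + u * b3 x v z) (u v y z : B) :
    quasiJacobiator b2 b3 (u * v) y z =
      u • quasiJacobiator b2 b3 v y z + v • quasiJacobiator b2 b3 u y z := by
  simp only [quasiJacobiator_apply, smul_eq_mul, hd2₁, hd2₂, hd3₁, hd3₂, map_add,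
    LinearMap.add_apply]
  linear_combination b2 v y * hskew z u + b2 u y * hskew z v

theorem quasiJacobiator_mul_mid
    (hd3₁ : ∀ u v y z : B, b3 (u * v) y z = b3 u y z * v + u * b3 v y z)
    (hd3₂ : ∀ x u v z : B, b3 x (u * v) z = b3 x u z * v + u * b3 x v z) (x u v z : B) :
    quasiJacobiator b2 b3 x (u * v) z =
      u • quasiJacobiator b2 b3 x v z + v • quasiJacobiator b2 b3 x u z := by
  simp only [quasiJacobiator_apply, smul_eq_mul, hd2₁, hd2₂, hd3₁, hd3₂, map_add,
    LinearMap.add_apply]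
  linear_combination b2 v z * hskew x u + b2 u z * hskew x v

theorem quasiJacobiator_mul_right
    (hd3₃ : ∀ x y u v : B, b3 x y (u * v) = b3 x y u * v + u * b3 x y v) (x y u v : B) :
    quasiJacobiator b2 b3 x y (u * v) =
      u • quasiJacobiator b2 b3 x y v + v • quasiJacobiator b2 b3 x y u := by
  simp only [quasiJacobiator_apply, smul_eq_mul, hd2₁, hd2₂, hd3₃, map_add,
    LinearMap.add_apply]
  linear_combination b2 v x * hskew y u + b2 u x * hskew y v

end QuasiJacobi

theorem quasi_jacobi_of_generators_general {R : Type*} [CommRing R]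
    {B : Type*} [CommRing B] [Algebra R B]
    (b2 : B →ₗ[R] B →ₗ[R] B) (b3 : B →ₗ[R] B →ₗ[R] B →ₗ[R] B)
    (hskew : ∀ x y : B, b2 x y = - b2 y x)
    (hd2₁ : ∀ u v y : B, b2 (u * v) y = b2 u y * v + u * b2 v y)
    (hd2₂ : ∀ x u v : B, b2 x (u * v) = b2 x u * v + u * b2 x v)
    (hd3₁ : ∀ u v y z : B, b3 (u * v) y z = b3 u y z * v + u * b3 v y z)
    (hd3₂ : ∀ x u v z : B, b3 x (u * v) z = b3 x u z * v + u * b3 x v z)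
    (hd3₃ : ∀ x y u v : B, b3 x y (u * v) = b3 x y u * v + u * b3 x y v)
    (S : Set B) (hS : Algebra.adjoin R S = ⊤)
    (hJ : ∀ x ∈ S, ∀ y ∈ S, ∀ z ∈ S,
      b2 (b2 x y) z + b2 (b2 y z) x + b2 (b2 z x) y = b3 x y z - b3 y x z) :
    ∀ x y z : B,
      b2 (b2 x y) z + b2 (b2 y z) x + b2 (b2 z x) y = b3 x y z - b3 y x z := by
  intro x y z
  have hJ_zero := LinearMap.apply₃_eq_zero_of_leibniz
    (quasiJacobiator_mul_left hskew hd2₁ hd2₂ hd3₁ hd3₂)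
    (quasiJacobiator_mul_mid hskew hd2₁ hd2₂ hd3₁ hd3₂)
    (quasiJacobiator_mul_right hskew hd2₁ hd2₂ hd3₃) hS
    (fun x hx y hy z hz => by rw [quasiJacobiator_apply, hJ x hx y hy z hz, sub_self]) x y z
  rwa [quasiJacobiator_apply, sub_eq_zero] at hJ_zero

/-- If a skew-symmetric biderivation `[-,-]` and a cyclically symmetric
triderivation `[-,-,-]` on a commutative algebra `B` satisfy the quasi-Jacobi
identity on a generating set `S`, then they satisfy it on all of `B`. -/
theorem quasi_jacobi_of_generators {R : Type*} [CommRing R]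
    {B : Type*} [CommRing B] [Algebra R B]
    (b2 : B →ₗ[R] B →ₗ[R] B) (b3 : B →ₗ[R] B →ₗ[R] B →ₗ[R] B)
    (hskew : ∀ x y : B, b2 x y = - b2 y x)
    (hcyc : ∀ x y z : B, b3 x y z = b3 z x y)
    (hd2₁ : ∀ u v y : B, b2 (u * v) y = b2 u y * v + u * b2 v y)
    (hd2₂ : ∀ x u v : B, b2 x (u * v) = b2 x u * v + u * b2 x v)
    (hd3₁ : ∀ u v y z : B, b3 (u * v) y z = b3 u y z * v + u * b3 v y z)
    (hd3₂ : ∀ x u v z : B, b3 x (u * v) z = b3 x u z * v + u * b3 x v z)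
    (hd3₃ : ∀ x y u v : B, b3 x y (u * v) = b3 x y u * v + u * b3 x y v)
    (S : Set B) (hS : Algebra.adjoin R S = ⊤)
    (hJ : ∀ x ∈ S, ∀ y ∈ S, ∀ z ∈ S,
      b2 (b2 x y) z + b2 (b2 y z) x + b2 (b2 z x) y = b3 x y z - b3 y x z) :
    ∀ x y z : B,
      b2 (b2 x y) z + b2 (b2 y z) x + b2 (b2 z x) y = b3 x y z - b3 y x z :=
  quasi_jacobi_of_generators_general b2 b3 hskew hd2₁ hd2₂ hd3₁ hd3₂ hd3₃ S hS hJ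
end

section
/- Let ([−,−],[−,−,−]) be a quasi-Lie pair of brackets in an R-module M. Then the 3-bracket s : M³ → M defined by s(x,y,z) = 2[x,y,z] − [[x,y],z] − [[y,z],x] − [[z,x],y] is fully symmetric, i.e., invariant under all permutations of the three variables. -/
/-!
Substituting the quasi-Jacobi identity, `s(x,y,z) = [x,y,z] + [y,x,z]`. A cyclically symmetric
3-bracket turns into a fully symmetric one once it is symmetrized in its first two variables,
because every permutation of three letters is a cyclic one possibly composed with that transposition.
-/

theorem two_smul_sub_jacobiator_eq_add_swap {R M : Type*} [Semiring R] [AddCommGroup M]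
    [Module R M] (b2 : M → M → M) (b3 : M → M → M → M) {x y z : M}
    (hJ : b2 (b2 x y) z + b2 (b2 y z) x + b2 (b2 z x) y = b3 x y z - b3 y x z) :
    (2 : R) • b3 x y z - b2 (b2 x y) z - b2 (b2 y z) x - b2 (b2 z x) y =
      b3 x y z + b3 y x z := by
  rw [two_smul, sub_sub, sub_sub, ← add_assoc, hJ]
  abel

theorem fully_symmetric_of_eq_add_swap {α N : Type*} [AddCommMagma N]
    (f : α → α → α → N) (hf : ∀ x y z, f x y z = f z x y)
    {s : α → α → α → N} (hs : ∀ x y z, s x y z = f x y z + f y x z) (x y z : α) :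
    s x y z = s y x z ∧ s x y z = s x z y ∧ s x y z = s z y x ∧
      s x y z = s z x y ∧ s x y z = s y z x := by
  have hswap : ∀ x y z, f y x z = f x z y := fun x y z => by rw [hf y x z, hf z y x]
  simp only [hs]
  refine ⟨add_comm _ _, ?_, ?_, ?_, ?_⟩
  · rw [hswap x y z, ← hf x y z, add_comm]
  · rw [← hf y x z, hf y z x, add_comm]
  · rw [hswap x y z, ← hf x y z]
  · rw [hf y z x, ← hf y x z]

theorem quasiLie_symmetrization_fully_symmetric_general {R : Type*} [CommRing R]
    {M : Type*} [AddCommGroup M] [Module R M]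
    (b2 : M →ₗ[R] M →ₗ[R] M) (b3 : M →ₗ[R] M →ₗ[R] M →ₗ[R] M)
    (hcyc : ∀ x y z : M, b3 x y z = b3 z x y)
    (hJ : ∀ x y z : M,
      b2 (b2 x y) z + b2 (b2 y z) x + b2 (b2 z x) y = b3 x y z - b3 y x z)
    (s : M → M → M → M)
    (hs : ∀ x y z : M, s x y z =
      (2 : R) • b3 x y z - b2 (b2 x y) z - b2 (b2 y z) x - b2 (b2 z x) y) :
    ∀ x y z : M,
      s x y z = s y x z ∧ s x y z = s x z y ∧ s x y z = s z y x ∧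
      s x y z = s z x y ∧ s x y z = s y z x :=
  fully_symmetric_of_eq_add_swap (fun x y z => b3 x y z) hcyc fun x y z =>
    (hs x y z).trans (two_smul_sub_jacobiator_eq_add_swap (R := R) (fun x y => b2 x y)
      (fun x y z => b3 x y z) (hJ x y z))

/-- For a quasi-Lie pair of brackets `([-,-], [-,-,-])` in a module `M`, the
3-bracket `s(x,y,z) = 2[x,y,z] - [[x,y],z] - [[y,z],x] - [[z,x],y]` is fully
symmetric, i.e. invariant under all permutations of the three variables. -/
theorem quasiLie_symmetrization_fully_symmetric {R : Type*} [CommRing R]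
    {M : Type*} [AddCommGroup M] [Module R M]
    (b2 : M →ₗ[R] M →ₗ[R] M) (b3 : M →ₗ[R] M →ₗ[R] M →ₗ[R] M)
    (hskew : ∀ x y : M, b2 x y = - b2 y x)
    (hcyc : ∀ x y z : M, b3 x y z = b3 z x y)
    (hJ : ∀ x y z : M,
      b2 (b2 x y) z + b2 (b2 y z) x + b2 (b2 z x) y = b3 x y z - b3 y x z)
    (s : M → M → M → M)
    (hs : ∀ x y z : M, s x y z =
      (2 : R) • b3 x y z - b2 (b2 x y) z - b2 (b2 y z) x - b2 (b2 z x) y) :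
    ∀ x y z : M,
      s x y z = s y x z ∧ s x y z = s x z y ∧ s x y z = s z y x ∧
      s x y z = s z x y ∧ s x y z = s y z x :=
  quasiLie_symmetrization_fully_symmetric_general b2 b3 hcyc hJ s hs
end

section
/- Suppose 2 is invertible in R. Let M be an R-module, [−,−] a skew-symmetric 2-bracket in M, and s a fully symmetric 3-bracket in M. Define the 3-bracket T by T(x,y,z) = (1/2)·(s(x,y,z) + [[x,y],z] + [[y,z],x] + [[z,x],y]). Then T is cyclically symmetric and the pair ([−,−], T) is a quasi-Lie pair, i.e., [[x,y],z] + [[y,z],x] + [[z,x],y] = T(x,y,z) − T(y,x,z) for all x, y, z ∈ M. -/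
/-!
Write `J(x,y,z) = [[x,y],z] + [[y,z],x] + [[z,x],y]`, so that `T = ½(s + J)`. Both `s` and `J` are
cyclically symmetric, hence so is `T`; transposing `x` and `y` fixes `s` but, by skew-symmetry,
negates `J`, so `T(x,y,z) - T(y,x,z) = ½(s + J) - ½(s - J) = J`.
-/

section Jacobiator

variable {R M : Type*} [CommSemiring R] [AddCommGroup M] [Module R M]

def jacobiator (b : M →ₗ[R] M →ₗ[R] M) (x y z : M) : M :=
  b (b x y) z + b (b y z) x + b (b z x) y

theorem jacobiator_cycle (b : M →ₗ[R] M →ₗ[R] M) (x y z : M) :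
    jacobiator b x y z = jacobiator b z x y := by
  unfold jacobiator
  abel

theorem jacobiator_swap {b : M →ₗ[R] M →ₗ[R] M} (hskew : ∀ x y : M, b x y = -b y x)
    (x y z : M) : jacobiator b y x z = -jacobiator b x y z := by
  simp only [jacobiator, hskew y x, hskew x z, hskew z y, map_neg, LinearMap.neg_apply]
  abel

end Jacobiator

theorem invOf_two_smul_add_sub_invOf_two_smul_sub {R M : Type*} [Semiring R] [Invertible (2 : R)]
    [AddCommGroup M] [Module R M] (a b : M) :
    ⅟(2 : R) • (a + b) - ⅟(2 : R) • (a - b) = b := by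
  rw [← smul_sub, add_sub_sub_cancel, smul_add, invOf_two_smul_add_invOf_two_smul]

/-- If `2` is invertible in `R`, a skew-symmetric 2-bracket `[-,-]` and a fully
symmetric 3-bracket `s` on a module `M` give rise to a quasi-Lie pair with
3-bracket `T(x,y,z) = (1/2)(s(x,y,z) + [[x,y],z] + [[y,z],x] + [[z,x],y])`:
`T` is cyclically symmetric and the quasi-Jacobi identity
`[[x,y],z] + [[y,z],x] + [[z,x],y] = T(x,y,z) - T(y,x,z)` holds. -/
theorem quasiLie_from_symmetric_bracket {R : Type*} [CommRing R] [Invertible (2 : R)]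
    {M : Type*} [AddCommGroup M] [Module R M]
    (b2 : M →ₗ[R] M →ₗ[R] M) (s : M →ₗ[R] M →ₗ[R] M →ₗ[R] M)
    (hskew : ∀ x y : M, b2 x y = - b2 y x)
    (hsym12 : ∀ x y z : M, s x y z = s y x z)
    (hsym23 : ∀ x y z : M, s x y z = s x z y)
    (T : M → M → M → M)
    (hT : ∀ x y z : M, T x y z =
      (⅟(2 : R)) • (s x y z + b2 (b2 x y) z + b2 (b2 y z) x + b2 (b2 z x) y)) :
    (∀ x y z : M, T x y z = T z x y) ∧
    (∀ x y z : M,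
      b2 (b2 x y) z + b2 (b2 y z) x + b2 (b2 z x) y = T x y z - T y x z) := by
  have hT' (x y z : M) : T x y z = ⅟(2 : R) • (s x y z + jacobiator b2 x y z) := by
    rw [hT, jacobiator, add_assoc, add_assoc, add_assoc]
  refine ⟨fun x y z => ?_, fun x y z => ?_⟩
  · rw [hT', hT', jacobiator_cycle b2 x y z, hsym12 z, hsym23 x]
  · rw [hT', hT', hsym12 y, jacobiator_swap hskew x y z, ← sub_eq_add_neg,
      invOf_two_smul_add_sub_invOf_two_smul_sub, jacobiator]
end
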